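/- arXiv:1701.05994 — 3 statements merged into one kernel-verified Lean document; each statement's English description precedes it below -/
import Mathlib

section
/- For every measurable function h : ℝ_{>0} → ℝ_{≥0}, the integral of h ∘ r over 𝒳 with respect to Lebesgue measure factorizes in polar form as ∫_{𝒳} h(r(x)) dx = ( ∫_{S^{p-1}} r(u)^{−p} dσ(u) ) · ( ∫_0^∞ h(s) s^{p−1} ds ). In particular, if x ↦ h(r(x)) is a probability density on ℝ^p, then the normalizing constant c_0 := 1 / ∫_{S^{p-1}} r(u)^{−p} dσ(u) equals ∫_0^∞ h(s) s^{p−1} ds. -/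
open MeasureTheory Metric Set

noncomputable section

lemma lintegral_Ioi_comp_mul {c : ℝ} (hc : 0 < c) {g : ℝ → ENNReal} (hg : Measurable g) :
    ∫⁻ t in Set.Ioi (0:ℝ), g (c * t) = ENNReal.ofReal c⁻¹ * ∫⁻ s in Set.Ioi (0:ℝ), g s := by
  have hne : c ≠ 0 := hc.ne'
  have hmap : (volume : Measure ℝ).restrict (Set.Ioi 0)
      = ENNReal.ofReal c • Measure.map (c * ·) ((volume : Measure ℝ).restrict (Set.Ioi 0)) := by
    conv_lhs => rw [← Real.smul_map_volume_mul_left hne]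
    rw [abs_of_pos hc, Measure.restrict_smul,
      Measure.restrict_map (measurable_const_mul c) measurableSet_Ioi,
      preimage_const_mul_Ioi₀ _ hc, zero_div]
  have h1 : ∫⁻ s in Set.Ioi (0:ℝ), g s
      = ENNReal.ofReal c * ∫⁻ t in Set.Ioi (0:ℝ), g (c * t) := by
    conv_lhs => rw [hmap]
    rw [lintegral_smul_measure, lintegral_map hg (measurable_const_mul c), smul_eq_mul]
  rw [h1, ← mul_assoc, ← ENNReal.ofReal_mul (by positivity), inv_mul_cancel₀ hne,
    ENNReal.ofReal_one, one_mul]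

/-- Polar factorization: for measurable `h : ℝ_{>0} → ℝ_{≥0}`,
`∫_{𝒳} h(r(x)) dx = (∫_{S^{p-1}} r(u)^{−p} dσ(u)) · (∫_0^∞ h(s) s^{p−1} ds)`,
where `σ` is the surface measure on the unit sphere of `ℝ^p`. In particular, if
`x ↦ h(r(x))` is a probability density, then
`c₀ := 1/∫_{S^{p-1}} r(u)^{−p} dσ(u) = ∫_0^∞ h(s) s^{p−1} ds`. -/
theorem polar_factorization {p : ℕ} (hp : 2 ≤ p)
    (r : EuclideanSpace ℝ (Fin p) → ℝ)
    (hr_cont : ContinuousOn r {x : EuclideanSpace ℝ (Fin p) | x ≠ 0})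
    (hr_pos : ∀ x : EuclideanSpace ℝ (Fin p), x ≠ 0 → 0 < r x)
    (hr_equiv : ∀ c : ℝ, 0 < c → ∀ x : EuclideanSpace ℝ (Fin p), x ≠ 0 →
      r (c • x) = c * r x)
    (h : ℝ → ℝ) (hh_meas : Measurable h) (hh_nonneg : ∀ s : ℝ, 0 < s → 0 ≤ h s) :
    ((∫ x in {x : EuclideanSpace ℝ (Fin p) | x ≠ 0}, h (r x))
        = (∫ u : sphere (0 : EuclideanSpace ℝ (Fin p)) 1,
              r (u : EuclideanSpace ℝ (Fin p)) ^ (-(p : ℝ))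
              ∂(volume : Measure (EuclideanSpace ℝ (Fin p))).toSphere)
          * ∫ s in Set.Ioi (0 : ℝ), h s * s ^ ((p : ℝ) - 1))
      ∧ ((∫ x in {x : EuclideanSpace ℝ (Fin p) | x ≠ 0}, h (r x)) = 1 →
          1 / (∫ u : sphere (0 : EuclideanSpace ℝ (Fin p)) 1,
                r (u : EuclideanSpace ℝ (Fin p)) ^ (-(p : ℝ))
                ∂(volume : Measure (EuclideanSpace ℝ (Fin p))).toSphere)
            = ∫ s in Set.Ioi (0 : ℝ), h s * s ^ ((p : ℝ) - 1)) := by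
  have hp1 : 1 ≤ p := le_trans one_le_two hp
  haveI : Nontrivial (EuclideanSpace ℝ (Fin p)) :=
    Module.nontrivial_of_finrank_pos (R := ℝ)
      (by rw [finrank_euclideanSpace_fin]; omega)
  have hdim : Module.finrank ℝ (EuclideanSpace ℝ (Fin p)) = p := finrank_euclideanSpace_fin
  have hS : MeasurableSet {x : EuclideanSpace ℝ (Fin p) | x ≠ 0} :=
    (measurableSet_singleton (0 : EuclideanSpace ℝ (Fin p))).compl
  -- basic facts about `r` on the sphere
  have hsp_ne : ∀ u : sphere (0 : EuclideanSpace ℝ (Fin p)) 1, (u : EuclideanSpace ℝ (Fin p)) ≠ 0 :=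
    fun u => ne_of_mem_sphere u.2 one_ne_zero
  have hrs : Continuous fun u : sphere (0 : EuclideanSpace ℝ (Fin p)) 1 => r u :=
    hr_cont.comp_continuous continuous_subtype_val (fun u => hsp_ne u)
  have hrpos' : ∀ u : sphere (0 : EuclideanSpace ℝ (Fin p)) 1, 0 < r u :=
    fun u => hr_pos _ (hsp_ne u)
  have hfc : Continuous fun u : sphere (0 : EuclideanSpace ℝ (Fin p)) 1 => r u ^ (-(p : ℝ)) :=
    hrs.rpow_const fun u => Or.inl (hrpos' u).ne'
  have hfm : Measurable fun u : sphere (0 : EuclideanSpace ℝ (Fin p)) 1 =>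
      ENNReal.ofReal (r u ^ (-(p : ℝ))) := hfc.measurable.ennreal_ofReal
  -- the lintegrals
  set L := ∫⁻ u : sphere (0 : EuclideanSpace ℝ (Fin p)) 1, ENNReal.ofReal (r u ^ (-(p : ℝ)))
    ∂(volume : Measure (EuclideanSpace ℝ (Fin p))).toSphere with hL
  set M := ∫⁻ s in Set.Ioi (0:ℝ), ENNReal.ofReal (h s * s ^ ((p:ℝ) - 1)) with hM
  have hG_meas : Measurable fun s : ℝ => ENNReal.ofReal (h s * s ^ ((p:ℝ) - 1)) := by
    fun_prop
  -- the key lintegral identity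
  have key : ∫⁻ x in {x : EuclideanSpace ℝ (Fin p) | x ≠ 0}, ENNReal.ofReal (h (r x)) = L * M := by
    have hset : {x : EuclideanSpace ℝ (Fin p) | x ≠ 0}
        = ({0}ᶜ : Set (EuclideanSpace ℝ (Fin p))) := rfl
    rw [hset, ← lintegral_subtype_comap (measurableSet_singleton (0:EuclideanSpace ℝ (Fin p))).compl
      (fun x => ENNReal.ofReal (h (r x)))]
    set g : sphere (0 : EuclideanSpace ℝ (Fin p)) 1 × Set.Ioi (0:ℝ) → ENNReal :=
      fun z => ENNReal.ofReal (h (z.2.1 * r z.1.1)) with hgdef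
    have hg : Measurable g := by
      apply Measurable.ennreal_ofReal
      exact hh_meas.comp ((measurable_subtype_coe.comp measurable_snd).mul
        (hrs.measurable.comp measurable_fst))
    have h3 : ∫⁻ x : ({0}ᶜ : Set (EuclideanSpace ℝ (Fin p))), ENNReal.ofReal (h (r x.1))
          ∂((volume : Measure (EuclideanSpace ℝ (Fin p))).comap Subtype.val)
        = ∫⁻ z, g z ∂(((volume : Measure (EuclideanSpace ℝ (Fin p))).toSphere).prod
            (Measure.volumeIoiPow (Module.finrank ℝ (EuclideanSpace ℝ (Fin p)) - 1))) := by
      rw [← (Measure.measurePreserving_homeomorphUnitSphereProd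
        (volume : Measure (EuclideanSpace ℝ (Fin p)))).lintegral_comp hg]
      refine lintegral_congr fun x => ?_
      have hx : (x : EuclideanSpace ℝ (Fin p)) ≠ 0 := x.2
      have hnx : (0:ℝ) < ‖(x : EuclideanSpace ℝ (Fin p))‖ := norm_pos_iff.2 hx
      have hr2 : r (x : EuclideanSpace ℝ (Fin p))
          = ‖(x : EuclideanSpace ℝ (Fin p))‖
            * r (‖(x : EuclideanSpace ℝ (Fin p))‖⁻¹ • (x : EuclideanSpace ℝ (Fin p))) := by
        have := hr_equiv ‖(x : EuclideanSpace ℝ (Fin p))‖ hnx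
          (‖(x : EuclideanSpace ℝ (Fin p))‖⁻¹ • (x : EuclideanSpace ℝ (Fin p)))
          (smul_ne_zero (inv_ne_zero hnx.ne') hx)
        rw [smul_smul, mul_inv_cancel₀ hnx.ne', one_smul] at this
        exact this
      simp only [hgdef, homeomorphUnitSphereProd_apply_fst_coe,
        homeomorphUnitSphereProd_apply_snd_coe]
      rw [hr2]
    rw [h3, hdim, lintegral_prod g hg.aemeasurable]
    have h5 : ∀ u : sphere (0 : EuclideanSpace ℝ (Fin p)) 1,
        ∫⁻ t : Set.Ioi (0:ℝ), g (u, t) ∂(Measure.volumeIoiPow (p - 1))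
          = ENNReal.ofReal (r u ^ (-(p : ℝ))) * M := by
      intro u
      have hcpos : 0 < r (u : EuclideanSpace ℝ (Fin p)) := hrpos' u
      have hF : Measurable fun t : Set.Ioi (0:ℝ) => g (u, t) := by
        apply Measurable.ennreal_ofReal
        exact hh_meas.comp (measurable_subtype_coe.mul
          (measurable_const (a := r (u : EuclideanSpace ℝ (Fin p)))))
      rw [Measure.volumeIoiPow, lintegral_withDensity_eq_lintegral_mul _
        (by fun_prop) hF]
      have hcomp : (fun t : Set.Ioi (0:ℝ) =>
            ((fun x : Set.Ioi (0:ℝ) => ENNReal.ofReal (x.1 ^ (p-1)))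
              * fun t : Set.Ioi (0:ℝ) => g (u, t)) t)
          = fun t : Set.Ioi (0:ℝ) =>
              (fun s : ℝ => ENNReal.ofReal (s ^ (p-1))
                * ENNReal.ofReal (h (s * r (u : EuclideanSpace ℝ (Fin p))))) t.1 := rfl
      have hsub := lintegral_subtype_comap (μ := (volume : Measure ℝ)) (s := Set.Ioi (0:ℝ)) measurableSet_Ioi
        (fun s : ℝ => ENNReal.ofReal (s ^ (p-1))
          * ENNReal.ofReal (h (s * r (u : EuclideanSpace ℝ (Fin p)))))
      rw [hcomp, hsub]
      have hpt : ∀ s ∈ Set.Ioi (0:ℝ),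
          ENNReal.ofReal (s ^ (p-1))
              * ENNReal.ofReal (h (s * r (u : EuclideanSpace ℝ (Fin p))))
            = ENNReal.ofReal ((r (u : EuclideanSpace ℝ (Fin p)))⁻¹ ^ (p-1)) *
                ENNReal.ofReal (h (r (u : EuclideanSpace ℝ (Fin p)) * s)
                  * (r (u : EuclideanSpace ℝ (Fin p)) * s) ^ ((p:ℝ) - 1)) := by
        intro s hs
        have hs0 : (0:ℝ) < s := hs
        set c := r (u : EuclideanSpace ℝ (Fin p)) with hc
        have hcs : (0:ℝ) < c * s := mul_pos hcpos hs0
        have hrp : (c * s) ^ ((p:ℝ) - 1) = (c * s) ^ (p - 1) := by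
          rw [show ((p:ℝ) - 1) = ((p - 1 : ℕ) : ℝ) by push_cast [Nat.cast_sub hp1]; ring,
            Real.rpow_natCast]
        rw [hrp, ← ENNReal.ofReal_mul (by positivity), ← ENNReal.ofReal_mul (by positivity)]
        congr 1
        rw [mul_comm s c]
        have hcc : c⁻¹ ^ (p-1) * (c * s) ^ (p-1) = s ^ (p-1) := by
          rw [mul_pow, ← mul_assoc, ← mul_pow, inv_mul_cancel₀ hcpos.ne', one_pow, one_mul]
        calc s ^ (p-1) * h (c * s)
            = c⁻¹ ^ (p-1) * (c * s) ^ (p-1) * h (c * s) := by rw [hcc]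
          _ = c⁻¹ ^ (p-1) * (h (c * s) * (c * s) ^ (p-1)) := by ring
      rw [setLIntegral_congr_fun measurableSet_Ioi hpt,
        lintegral_const_mul _ (by fun_prop),
        lintegral_Ioi_comp_mul hcpos hG_meas, ← mul_assoc,
        ← ENNReal.ofReal_mul (by positivity)]
      congr 2
      rw [Real.rpow_neg hcpos.le, Real.rpow_natCast, ← inv_pow,
        ← pow_succ, Nat.sub_add_cancel hp1]
    calc ∫⁻ u : sphere (0 : EuclideanSpace ℝ (Fin p)) 1, ∫⁻ t : Set.Ioi (0:ℝ), g (u, t)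
          ∂(Measure.volumeIoiPow (p - 1))
            ∂(volume : Measure (EuclideanSpace ℝ (Fin p))).toSphere
        = ∫⁻ u : sphere (0 : EuclideanSpace ℝ (Fin p)) 1,
            ENNReal.ofReal (r u ^ (-(p : ℝ))) * M
            ∂(volume : Measure (EuclideanSpace ℝ (Fin p))).toSphere := lintegral_congr h5
      _ = L * M := lintegral_mul_const M hfm
  -- conversions between Bochner integrals and lintegrals
  have conv1 : (∫ x in {x : EuclideanSpace ℝ (Fin p) | x ≠ 0}, h (r x))
      = (∫⁻ x in {x : EuclideanSpace ℝ (Fin p) | x ≠ 0}, ENNReal.ofReal (h (r x))).toReal := by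
    rw [integral_eq_lintegral_of_nonneg_ae]
    · exact (ae_restrict_iff' hS).2 (Filter.Eventually.of_forall
        fun x hx => hh_nonneg _ (hr_pos x hx))
    · exact (hh_meas.comp_aemeasurable (hr_cont.aemeasurable hS)).aestronglyMeasurable
  have conv2 : (∫ u : sphere (0 : EuclideanSpace ℝ (Fin p)) 1,
        r (u : EuclideanSpace ℝ (Fin p)) ^ (-(p : ℝ))
        ∂(volume : Measure (EuclideanSpace ℝ (Fin p))).toSphere) = L.toReal := by
    rw [integral_eq_lintegral_of_nonneg_ae]
    · exact Filter.Eventually.of_forall fun u => Real.rpow_nonneg (hrpos' u).le _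
    · exact hfc.aestronglyMeasurable
  have conv3 : (∫ s in Set.Ioi (0:ℝ), h s * s ^ ((p:ℝ) - 1)) = M.toReal := by
    rw [integral_eq_lintegral_of_nonneg_ae]
    · refine (ae_restrict_iff' measurableSet_Ioi).2 (Filter.Eventually.of_forall
        fun s hs => mul_nonneg (hh_nonneg s hs) (Real.rpow_nonneg (le_of_lt hs) _))
    · exact ((hh_meas.mul (by fun_prop))).aestronglyMeasurable
  have part1 : (∫ x in {x : EuclideanSpace ℝ (Fin p) | x ≠ 0}, h (r x))
      = (∫ u : sphere (0 : EuclideanSpace ℝ (Fin p)) 1,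
          r (u : EuclideanSpace ℝ (Fin p)) ^ (-(p : ℝ))
          ∂(volume : Measure (EuclideanSpace ℝ (Fin p))).toSphere)
        * ∫ s in Set.Ioi (0:ℝ), h s * s ^ ((p:ℝ) - 1) := by
    rw [conv1, conv2, conv3, key, ENNReal.toReal_mul]
  refine ⟨part1, fun hone => ?_⟩
  -- positivity and finiteness of `L`
  have hLpos : 0 < L := by
    rw [hL, lintegral_pos_iff_support hfm]
    have hsupp : (Function.support fun u : sphere (0 : EuclideanSpace ℝ (Fin p)) 1 =>
        ENNReal.ofReal (r u ^ (-(p : ℝ)))) = Set.univ := by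
      ext u
      simp only [Function.mem_support, Set.mem_univ, iff_true]
      exact (ENNReal.ofReal_pos.2 (Real.rpow_pos_of_pos (hrpos' u) _)).ne'
    rw [hsupp, Measure.toSphere_apply_univ, hdim]
    exact ENNReal.mul_pos (by exact_mod_cast Nat.cast_ne_zero.2 (by omega))
      (measure_ball_pos _ _ one_pos).ne'
  have hLne : L ≠ ⊤ := by
    haveI : Nonempty (sphere (0 : EuclideanSpace ℝ (Fin p)) 1) :=
      (NormedSpace.sphere_nonempty.mpr zero_le_one).to_subtype
    obtain ⟨u₀, -, hu₀⟩ := isCompact_univ.exists_isMaxOn Set.univ_nonempty hfc.continuousOn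
    have hb : L ≤ ENNReal.ofReal (r (u₀ : EuclideanSpace ℝ (Fin p)) ^ (-(p : ℝ)))
        * ((volume : Measure (EuclideanSpace ℝ (Fin p))).toSphere) Set.univ := by
      rw [← lintegral_const]
      exact lintegral_mono fun u => ENNReal.ofReal_le_ofReal (hu₀ (Set.mem_univ u))
    refine ne_top_of_le_ne_top ?_ hb
    exact ENNReal.mul_ne_top ENNReal.ofReal_ne_top (measure_ne_top _ _)
  have hLt : 0 < L.toReal := ENNReal.toReal_pos hLpos.ne' hLne
  rw [part1, conv2, conv3] at hone
  rw [conv2, conv3, div_eq_iff hLt.ne']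
  nlinarith [hone]
end
end

section
/- Let h : ℝ_{>0} → ℝ_{≥0} be measurable and such that x ↦ h(r(x)) is a probability density with respect to Lebesgue measure on ℝ^p. If the random vector x has density h(r(x)), then the direction u = x/‖x‖ has density f(u) = c_0 · r(u)^{−p} with respect to the surface measure σ on S^{p-1}, where c_0 = 1 / ∫_{S^{p-1}} r(v)^{−p} dσ(v). That is, the pushforward under x ↦ x/‖x‖ of the measure on 𝒳 with Lebesgue density h ∘ r has density u ↦ c_0 r(u)^{−p} with respect to σ. -/
/-!
In polar coordinates `x = t • u` (`t > 0`, `u` on the unit sphere) the Haar measure becomes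
`t ^ (p - 1) dt dσ(u)`, and homogeneity gives `r (t • u) = t * r u`. Substituting `s = t * r u` in
the radial integral shows that the mass of `{x | ‖x‖⁻¹ • x ∈ A}` is
`(∫_A r(u) ^ (-p) dσ) * ∫_0^∞ s ^ (p - 1) h(s) ds`; total mass one fixes the constant.
-/

open MeasureTheory Metric Set Module
open scoped ENNReal

theorem Real.lintegral_comp_mul_left (f : ℝ → ℝ≥0∞) {c : ℝ} (hc : 0 < c) :
    ∫⁻ t, f (c * t) = ENNReal.ofReal c⁻¹ * ∫⁻ t, f t := by
  have := lintegral_map_equiv f (MeasurableEquiv.mulLeft₀ c hc.ne') (μ := volume)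
  simp only [MeasurableEquiv.coe_mulLeft₀] at this
  rw [← this, Real.map_volume_mul_left hc.ne', lintegral_smul_measure, abs_of_pos (inv_pos.2 hc),
    smul_eq_mul]

theorem lintegral_Ioi_pow_mul_comp_mul (n : ℕ) (f : ℝ → ℝ≥0∞) {c : ℝ} (hc : 0 < c) :
    ∫⁻ t in Ioi 0, ENNReal.ofReal (t ^ n) * f (c * t)
      = ENNReal.ofReal (c⁻¹ ^ (n + 1)) * ∫⁻ t in Ioi 0, ENNReal.ofReal (t ^ n) * f t := by
  set F := (Ioi (0 : ℝ)).indicator fun s ↦ ENNReal.ofReal ((c⁻¹ * s) ^ n) * f s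
  have hF (t : ℝ) :
      (Ioi 0).indicator (fun t ↦ ENNReal.ofReal (t ^ n) * f (c * t)) t = F (c * t) := by
    simp [F, indicator, mul_pos_iff_of_pos_left hc, inv_mul_cancel_left₀ hc.ne']
  rw [← lintegral_indicator measurableSet_Ioi, lintegral_congr hF,
    Real.lintegral_comp_mul_left F hc, lintegral_indicator measurableSet_Ioi]
  simp_rw [mul_pow, ENNReal.ofReal_mul (pow_nonneg (inv_nonneg.2 hc.le) _), mul_assoc]
  rw [lintegral_const_mul' _ _ ENNReal.ofReal_ne_top, ← mul_assoc,
    ← ENNReal.ofReal_mul (inv_nonneg.2 hc.le), pow_succ']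

section

variable {E : Type*} [NormedAddCommGroup E] [NormedSpace ℝ E]

theorem inv_norm_smul_smul_of_mem_sphere {u : E} (hu : u ∈ sphere (0 : E) 1) {t : ℝ}
    (ht : 0 < t) : ‖t • u‖⁻¹ • (t • u) = u := by
  rw [norm_smul, mem_sphere_zero_iff_norm.1 hu, Real.norm_of_nonneg ht.le, mul_one,
    inv_smul_smul₀ ht.ne']

variable [FiniteDimensional ℝ E] [Nontrivial E] [MeasurableSpace E] [BorelSpace E]
  (μ : Measure E) [μ.IsAddHaarMeasure]

theorem lintegral_eq_lintegral_toSphere_Ioi {f : E → ℝ≥0∞} (hf : Measurable f) :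
    ∫⁻ x, f x ∂μ = ∫⁻ u, (∫⁻ t in Ioi (0 : ℝ),
      ENNReal.ofReal (t ^ (finrank ℝ E - 1)) * f (t • (u : E))) ∂μ.toSphere := by
  have hF : Measurable fun y : sphere (0 : E) 1 × Ioi (0 : ℝ) ↦ f (y.2.1 • y.1.1) :=
    hf.comp (by fun_prop)
  calc ∫⁻ x, f x ∂μ = ∫⁻ x : ({0}ᶜ : Set E), f x ∂μ.comap Subtype.val := by
        rw [lintegral_subtype_comap (measurableSet_singleton _).compl, restrict_compl_singleton]
    _ = ∫⁻ y, f (y.2.1 • y.1.1) ∂μ.toSphere.prod (.volumeIoiPow (finrank ℝ E - 1)) := by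
        rw [← μ.measurePreserving_homeomorphUnitSphereProd.lintegral_comp_emb
          (Homeomorph.measurableEmbedding _)]
        congr 1 with x
        simp [smul_inv_smul₀ (norm_ne_zero_iff.2 x.2)]
    _ = ∫⁻ u, ∫⁻ t, f (t.1 • u.1) ∂.volumeIoiPow (finrank ℝ E - 1) ∂μ.toSphere :=
        lintegral_prod _ hF.aemeasurable
    _ = _ := by
        congr 1 with u
        have hfu : Measurable fun t : Ioi (0 : ℝ) ↦ f (t.1 • (u : E)) := hf.comp (by fun_prop)
        rw [Measure.volumeIoiPow, lintegral_withDensity_eq_lintegral_mul _ (by fun_prop) hfu,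
          ← lintegral_subtype_comap measurableSet_Ioi]
        rfl

variable {μ} {r : E → ℝ} (hr_cont : ContinuousOn r {x | x ≠ 0})
  (hr_pos : ∀ x : E, x ≠ 0 → 0 < r x)
  (hr_hom : ∀ c : ℝ, 0 < c → ∀ x : E, x ≠ 0 → r (c • x) = c * r x)
  {f : ℝ → ℝ≥0∞} (hf : Measurable f)
include hr_cont hr_pos hr_hom hf

theorem map_inv_norm_smul_withDensity_comp_homogeneous :
    (μ.withDensity fun x ↦ f (r x)).map (fun x ↦ ‖x‖⁻¹ • x)
      = (∫⁻ t in Ioi 0, ENNReal.ofReal (t ^ (finrank ℝ E - 1)) * f t) •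
        (μ.toSphere.withDensity fun u ↦ ENNReal.ofReal (r u ^ (-(finrank ℝ E : ℝ)))).map
          Subtype.val := by
  set I := ∫⁻ t in Ioi 0, ENNReal.ofReal (t ^ (finrank ℝ E - 1)) * f t
  have hr : Measurable r := measurable_of_continuousOn_compl_singleton 0 hr_cont
  have hdir : Measurable fun x : E ↦ ‖x‖⁻¹ • x := by fun_prop
  have hdensity :
      Measurable fun u : sphere (0 : E) 1 ↦ ENNReal.ofReal (r u ^ (-(finrank ℝ E : ℝ))) :=
    ((hr.comp measurable_subtype_coe).pow_const _).ennreal_ofReal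
  have hu0 (u : sphere (0 : E) 1) : (u : E) ≠ 0 := ne_of_mem_sphere u.2 one_ne_zero
  have hradial (u : sphere (0 : E) 1) :
      ∫⁻ t in Ioi 0, ENNReal.ofReal (t ^ (finrank ℝ E - 1)) * f (r (t • (u : E)))
        = ENNReal.ofReal (r u ^ (-(finrank ℝ E : ℝ))) * I := by
    rw [setLIntegral_congr_fun measurableSet_Ioi fun t ht ↦ by
      rw [hr_hom t ht u (hu0 u), mul_comm t]]
    rw [lintegral_Ioi_pow_mul_comp_mul _ _ (hr_pos _ (hu0 u)),
      Nat.sub_add_cancel finrank_pos, Real.rpow_neg (hr_pos _ (hu0 u)).le, Real.rpow_natCast,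
      inv_pow]
  ext s hs
  rw [Measure.map_apply hdir hs, Measure.smul_apply, Measure.map_apply measurable_subtype_coe hs,
    withDensity_apply _ (hdir hs), withDensity_apply _ (measurable_subtype_coe hs),
    ← lintegral_indicator (hdir hs), lintegral_eq_lintegral_toSphere_Ioi μ
      ((show Measurable fun x ↦ f (r x) from hf.comp hr).indicator (hdir hs)),
    ← lintegral_indicator (measurable_subtype_coe hs), smul_eq_mul,
    ← lintegral_const_mul _ (hdensity.indicator (measurable_subtype_coe hs))]
  congr 1 with u
  by_cases hu : (u : E) ∈ s
  · rw [indicator_of_mem (show u ∈ Subtype.val ⁻¹' s from hu), mul_comm, ← hradial]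
    refine setLIntegral_congr_fun measurableSet_Ioi fun t ht ↦ ?_
    rw [indicator_of_mem]
    simpa [inv_norm_smul_smul_of_mem_sphere u.2 ht] using hu
  · rw [indicator_of_notMem (show u ∉ Subtype.val ⁻¹' s from hu), mul_zero]
    refine (setLIntegral_congr_fun measurableSet_Ioi fun t ht ↦ ?_).trans lintegral_zero
    rw [indicator_of_notMem, mul_zero]
    simpa [inv_norm_smul_smul_of_mem_sphere u.2 ht] using hu

theorem map_inv_norm_smul_withDensity_comp_homogeneous_of_isProbabilityMeasure
    (hprob : IsProbabilityMeasure (μ.withDensity fun x ↦ f (r x))) :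
    (μ.withDensity fun x ↦ f (r x)).map (fun x ↦ ‖x‖⁻¹ • x)
      = (μ.toSphere.withDensity fun u ↦ ENNReal.ofReal
          ((1 / ∫ v, r v ^ (-(finrank ℝ E : ℝ)) ∂μ.toSphere) * r u ^ (-(finrank ℝ E : ℝ)))).map
          Subtype.val := by
  have key := map_inv_norm_smul_withDensity_comp_homogeneous hr_cont hr_pos hr_hom hf (μ := μ)
  have hr : Measurable r := measurable_of_continuousOn_compl_singleton 0 hr_cont
  set I := ∫⁻ t in Ioi 0, ENNReal.ofReal (t ^ (finrank ℝ E - 1)) * f t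
  set ν := μ.toSphere.withDensity fun u ↦ ENNReal.ofReal (r u ^ (-(finrank ℝ E : ℝ)))
  -- Comparing total masses forces `0 < ν univ < ⊤`, so the Bochner integral is not a junk `0`.
  have hIν : I * ν univ = 1 := by
    have := congrArg (· univ) key
    simp only [Measure.map_apply (by fun_prop : Measurable fun x : E ↦ ‖x‖⁻¹ • x)
      MeasurableSet.univ, preimage_univ, measure_univ, Measure.smul_apply,
      Measure.map_apply measurable_subtype_coe MeasurableSet.univ, smul_eq_mul] at this
    exact this.symm
  have hIinv : I = (ν univ)⁻¹ := ENNReal.eq_inv_of_mul_eq_one_left hIν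
  have hItop : I ≠ ⊤ := hIinv ▸ ENNReal.inv_ne_top.2 (right_ne_zero_of_mul_eq_one hIν)
  have hconst : 1 / ∫ v, r v ^ (-(finrank ℝ E : ℝ)) ∂μ.toSphere = I.toReal := by
    rw [integral_eq_lintegral_of_nonneg_ae, ← setLIntegral_univ,
      ← withDensity_apply _ MeasurableSet.univ, hIinv, ENNReal.toReal_inv, one_div]
    · exact .of_forall fun u ↦ Real.rpow_nonneg (hr_pos _ (ne_of_mem_sphere u.2 one_ne_zero)).le _
    · exact ((hr.comp measurable_subtype_coe).pow_const _).aestronglyMeasurable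
  rw [key, ← Measure.map_smul, ← withDensity_smul]
  · congr with u
    rw [hconst, ENNReal.ofReal_mul ENNReal.toReal_nonneg, ENNReal.ofReal_toReal hItop]
    rfl
  · exact ((hr.comp measurable_subtype_coe).pow_const _).ennreal_ofReal

end

theorem direction_density_general {p : ℕ} (hp : 2 ≤ p)
    (r : EuclideanSpace ℝ (Fin p) → ℝ)
    (hr_cont : ContinuousOn r {x : EuclideanSpace ℝ (Fin p) | x ≠ 0})
    (hr_pos : ∀ x : EuclideanSpace ℝ (Fin p), x ≠ 0 → 0 < r x)
    (hr_equiv : ∀ c : ℝ, 0 < c → ∀ x : EuclideanSpace ℝ (Fin p), x ≠ 0 →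
      r (c • x) = c * r x)
    (h : ℝ → ℝ) (hh_meas : Measurable h)
    (hprob : IsProbabilityMeasure
      ((volume : Measure (EuclideanSpace ℝ (Fin p))).withDensity
        fun x => ENNReal.ofReal (h (r x))))
    (c₀ : ℝ)
    (hc₀ : c₀ = 1 / ∫ v : sphere (0 : EuclideanSpace ℝ (Fin p)) 1,
        r (v : EuclideanSpace ℝ (Fin p)) ^ (-(p : ℝ))
        ∂(volume : Measure (EuclideanSpace ℝ (Fin p))).toSphere) :
    Measure.map (fun x : EuclideanSpace ℝ (Fin p) => ‖x‖⁻¹ • x)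
        ((volume : Measure (EuclideanSpace ℝ (Fin p))).withDensity
          fun x => ENNReal.ofReal (h (r x)))
      = Measure.map (Subtype.val :
            sphere (0 : EuclideanSpace ℝ (Fin p)) 1 → EuclideanSpace ℝ (Fin p))
          (((volume : Measure (EuclideanSpace ℝ (Fin p))).toSphere).withDensity
            fun u => ENNReal.ofReal
              (c₀ * r (u : EuclideanSpace ℝ (Fin p)) ^ (-(p : ℝ)))) := by
  have : Nonempty (Fin p) := ⟨⟨0, by omega⟩⟩
  have := map_inv_norm_smul_withDensity_comp_homogeneous_of_isProbabilityMeasure hr_cont hr_pos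
    hr_equiv hh_meas.ennreal_ofReal hprob
  rwa [finrank_euclideanSpace_fin, ← hc₀] at this

/-- If `x` has density `h(r(x))` with respect to Lebesgue measure on `ℝ^p`,
then the direction `u = x/‖x‖` has density `u ↦ c₀ r(u)^{−p}` with respect to the surface
measure `σ` on the unit sphere, where `c₀ = 1/∫_{S^{p-1}} r(v)^{−p} dσ(v)`: the pushforward
under `x ↦ ‖x‖⁻¹ • x` of the measure with Lebesgue density `h ∘ r` equals the measure on the
sphere with density `c₀ r(·)^{−p}` with respect to `σ` (pushed to `ℝ^p` by the inclusion). -/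
theorem direction_density {p : ℕ} (hp : 2 ≤ p)
    (r : EuclideanSpace ℝ (Fin p) → ℝ)
    (hr_cont : ContinuousOn r {x : EuclideanSpace ℝ (Fin p) | x ≠ 0})
    (hr_pos : ∀ x : EuclideanSpace ℝ (Fin p), x ≠ 0 → 0 < r x)
    (hr_equiv : ∀ c : ℝ, 0 < c → ∀ x : EuclideanSpace ℝ (Fin p), x ≠ 0 →
      r (c • x) = c * r x)
    (h : ℝ → ℝ) (hh_meas : Measurable h) (hh_nonneg : ∀ s : ℝ, 0 < s → 0 ≤ h s)
    (hprob : IsProbabilityMeasure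
      ((volume : Measure (EuclideanSpace ℝ (Fin p))).withDensity
        fun x => ENNReal.ofReal (h (r x))))
    (c₀ : ℝ)
    (hc₀ : c₀ = 1 / ∫ v : sphere (0 : EuclideanSpace ℝ (Fin p)) 1,
        r (v : EuclideanSpace ℝ (Fin p)) ^ (-(p : ℝ))
        ∂(volume : Measure (EuclideanSpace ℝ (Fin p))).toSphere) :
    Measure.map (fun x : EuclideanSpace ℝ (Fin p) => ‖x‖⁻¹ • x)
        ((volume : Measure (EuclideanSpace ℝ (Fin p))).withDensity
          fun x => ENNReal.ofReal (h (r x)))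
      = Measure.map (Subtype.val :
            sphere (0 : EuclideanSpace ℝ (Fin p)) 1 → EuclideanSpace ℝ (Fin p))
          (((volume : Measure (EuclideanSpace ℝ (Fin p))).toSphere).withDensity
            fun u => ENNReal.ofReal
              (c₀ * r (u : EuclideanSpace ℝ (Fin p)) ^ (-(p : ℝ)))) :=
  direction_density_general hp r hr_cont hr_pos hr_equiv h hh_meas hprob c₀ hc₀
end

section
/- The integral identity ∫_0^{π/2} ( (cos θ)^{1/2} + (sin θ)^{1/2} )^{−4} dθ = 1/3 holds. Equivalently, for r(x) = (|x(1)|^{1/2} + |x(2)|^{1/2})², one has ∫_0^{2π} r(cos θ, sin θ)^{−2} dθ = 4/3. -/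
open Set Real

noncomputable section

/-!
On `[0, π/2]` put `a = √(cos θ)`, `b = √(sin θ)` and `u = a / (a + b)`. Since `a⁴ + b⁴ = 1`,
`u' = -1 / (2ab(a + b)²)`, so `(2/3) u³ - u²`, whose `u`-derivative is `-2u(1 - u) = -2ab/(a + b)²`,
is an antiderivative of `(a + b)⁻⁴`; it runs from `-1/3` at `0` to `0` at `π/2`. The full-circle
integrand has period `π/2` and agrees with this one on `[0, π/2]`, whence `4 · 1/3`.
-/

lemma sqrt_abs_add_sqrt_abs_pos {x y : ℝ} (h : x ≠ 0 ∨ y ≠ 0) : 0 < √|x| + √|y| := by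
  rcases h with hx | hy
  · have := sqrt_pos.2 (abs_pos.2 hx); positivity
  · have := sqrt_pos.2 (abs_pos.2 hy); positivity

lemma cos_ne_zero_or_sin_ne_zero (θ : ℝ) : cos θ ≠ 0 ∨ sin θ ≠ 0 := by
  by_contra! h
  simpa [h.1, h.2] using sin_sq_add_cos_sq θ

lemma sqrt_abs_cos_add_sqrt_abs_sin_pos (θ : ℝ) : 0 < √|cos θ| + √|sin θ| :=
  sqrt_abs_add_sqrt_abs_pos (cos_ne_zero_or_sin_ne_zero θ)

lemma cos_pos_and_sin_pos_of_mem_Ioo {θ : ℝ} (hθ : θ ∈ Ioo 0 (π / 2)) :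
    0 < cos θ ∧ 0 < sin θ :=
  ⟨cos_pos_of_mem_Ioo ⟨by linarith [hθ.1, pi_pos], hθ.2⟩,
    sin_pos_of_pos_of_lt_pi hθ.1 (by linarith [hθ.2, pi_pos])⟩

lemma sqrt_cos_add_sqrt_sin_pos {θ : ℝ} (hθ : θ ∈ Icc 0 (π / 2)) : 0 < √(cos θ) + √(sin θ) := by
  have hc : 0 ≤ cos θ := cos_nonneg_of_mem_Icc ⟨by linarith [hθ.1, pi_pos], hθ.2⟩
  have hs : 0 ≤ sin θ := sin_nonneg_of_nonneg_of_le_pi hθ.1 (by linarith [hθ.2, pi_pos])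
  simpa [abs_of_nonneg hc, abs_of_nonneg hs] using sqrt_abs_cos_add_sqrt_abs_sin_pos θ

lemma hasDerivAt_sqrt_cos_div_sqrt_cos_add_sqrt_sin {θ : ℝ} (hθ : θ ∈ Ioo 0 (π / 2)) :
    HasDerivAt (fun θ ↦ √(cos θ) / (√(cos θ) + √(sin θ)))
      (-1 / (2 * √(cos θ) * √(sin θ) * (√(cos θ) + √(sin θ)) ^ 2)) θ := by
  obtain ⟨hc, hs⟩ := cos_pos_and_sin_pos_of_mem_Ioo hθ
  have ha : 0 < √(cos θ) := sqrt_pos.2 hc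
  have hb : 0 < √(sin θ) := sqrt_pos.2 hs
  have da := (hasDerivAt_cos θ).sqrt hc.ne'
  have db := (hasDerivAt_sin θ).sqrt hs.ne'
  have hpyth : √(cos θ) ^ 4 + √(sin θ) ^ 4 = 1 := by
    rw [show (4 : ℕ) = 2 * 2 from rfl, pow_mul, pow_mul, sq_sqrt hc.le, sq_sqrt hs.le,
      add_comm, sin_sq_add_cos_sq]
  refine (da.div (da.add db) (add_pos ha hb).ne').congr_deriv ?_
  simp only [Pi.add_apply]
  set a := √(cos θ)
  set b := √(sin θ)
  rw [show cos θ = a ^ 2 from (sq_sqrt hc.le).symm, show sin θ = b ^ 2 from (sq_sqrt hs.le).symm]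
  field_simp
  linear_combination -hpyth

lemma integral_sqrt_cos_add_sqrt_sin_rpow_neg_four :
    ∫ θ in (0 : ℝ)..(π / 2), (√(cos θ) + √(sin θ)) ^ (-4 : ℝ) = 1 / 3 := by
  set u : ℝ → ℝ := fun θ ↦ √(cos θ) / (√(cos θ) + √(sin θ))
  have hs : Continuous fun θ ↦ √(cos θ) + √(sin θ) := by fun_prop
  have hF_cont : ContinuousOn (fun θ ↦ 2 / 3 * u θ ^ 3 - u θ ^ 2) (Icc 0 (π / 2)) := by
    have hu : ContinuousOn u (Icc 0 (π / 2)) :=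
      (by fun_prop : Continuous fun θ ↦ √(cos θ)).continuousOn.div hs.continuousOn
        fun θ hθ ↦ (sqrt_cos_add_sqrt_sin_pos hθ).ne'
    fun_prop
  have hF_deriv : ∀ θ ∈ Ioo 0 (π / 2), HasDerivAt (fun θ ↦ 2 / 3 * u θ ^ 3 - u θ ^ 2)
      ((√(cos θ) + √(sin θ)) ^ (-4 : ℝ)) θ := by
    intro θ hθ
    obtain ⟨hc, hs⟩ := cos_pos_and_sin_pos_of_mem_Ioo hθ
    have ha : 0 < √(cos θ) := sqrt_pos.2 hc
    have hb : 0 < √(sin θ) := sqrt_pos.2 hs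
    have hu := hasDerivAt_sqrt_cos_div_sqrt_cos_add_sqrt_sin hθ
    refine (((hu.pow 3).const_mul (2 / 3)).sub (hu.pow 2)).congr_deriv ?_
    rw [rpow_neg (add_pos ha hb).le, show (4 : ℝ) = (4 : ℕ) by norm_num, rpow_natCast]
    set a := √(cos θ)
    set b := √(sin θ)
    simp only [Nat.cast_ofNat, Nat.add_one_sub_one]
    field_simp
    ring
  have hint : IntervalIntegrable (fun θ ↦ (√(cos θ) + √(sin θ)) ^ (-4 : ℝ)) MeasureTheory.volume
      0 (π / 2) :=
    (hs.continuousOn.rpow_const fun θ hθ ↦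
      Or.inl (sqrt_cos_add_sqrt_sin_pos hθ).ne').intervalIntegrable_of_Icc (by positivity)
  rw [intervalIntegral.integral_eq_sub_of_hasDerivAt_of_le (by positivity) hF_cont hF_deriv hint]
  norm_num [u]

lemma periodic_sqrt_abs_cos_add_sqrt_abs_sin :
    Function.Periodic (fun θ ↦ √|cos θ| + √|sin θ|) (π / 2) := by
  intro θ
  simp only [cos_add_pi_div_two, sin_add_pi_div_two, abs_neg, add_comm]

lemma integral_sqrt_abs_cos_add_sqrt_abs_sin_rpow_neg_four :
    ∫ θ in (0 : ℝ)..(2 * π), (√|cos θ| + √|sin θ|) ^ (-4 : ℝ) = 4 / 3 := by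
  set g : ℝ → ℝ := fun θ ↦ (√|cos θ| + √|sin θ|) ^ (-4 : ℝ)
  have hg_cont : Continuous g :=
    (by fun_prop : Continuous fun θ ↦ √|cos θ| + √|sin θ|).rpow_const
      fun θ ↦ Or.inl (sqrt_abs_cos_add_sqrt_abs_sin_pos θ).ne'
  have hg_periodic : Function.Periodic g (π / 2) :=
    periodic_sqrt_abs_cos_add_sqrt_abs_sin.comp (· ^ (-4 : ℝ))
  have hquarter : ∫ θ in (0 : ℝ)..(π / 2), g θ = 1 / 3 := by
    rw [← integral_sqrt_cos_add_sqrt_sin_rpow_neg_four]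
    refine intervalIntegral.integral_congr fun θ hθ ↦ ?_
    rw [uIcc_of_le (by positivity)] at hθ
    have hc : 0 ≤ cos θ := cos_nonneg_of_mem_Icc ⟨by linarith [hθ.1, pi_pos], hθ.2⟩
    have hs : 0 ≤ sin θ := sin_nonneg_of_nonneg_of_le_pi hθ.1 (by linarith [hθ.2, pi_pos])
    simp only [g, abs_of_nonneg hc, abs_of_nonneg hs]
  calc ∫ θ in (0 : ℝ)..(2 * π), g θ = ∫ θ in (0 : ℝ)..(0 + (4 : ℤ) • (π / 2)), g θ := by
        rw [zero_add, zsmul_eq_mul]; ring_nf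
    _ = (4 : ℤ) • ∫ θ in (0 : ℝ)..(0 + π / 2), g θ :=
        hg_periodic.intervalIntegral_add_zsmul_eq 4 0 hg_cont.intervalIntegrable
    _ = 4 / 3 := by rw [zero_add, hquarter]; norm_num

/-- `∫_0^{π/2} (√(cos θ) + √(sin θ))^{-4} dθ = 1/3`; equivalently, for the
`l_{1/2}`-gauge `r(x) = (√|x₁| + √|x₂|)²`, `∫_0^{2π} r(cos θ, sin θ)^{-2} dθ = 4/3`. -/
theorem l_half_sphere_integral :
    ((∫ θ in (0 : ℝ)..(Real.pi / 2),
        (Real.sqrt (Real.cos θ) + Real.sqrt (Real.sin θ)) ^ (-4 : ℝ)) = 1 / 3)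
      ∧ ∀ r : ℝ × ℝ → ℝ,
          (∀ x : ℝ × ℝ, r x = (Real.sqrt |x.1| + Real.sqrt |x.2|) ^ 2) →
          (∫ θ in (0 : ℝ)..(2 * Real.pi),
            r (Real.cos θ, Real.sin θ) ^ (-2 : ℝ)) = 4 / 3 := by
  refine ⟨integral_sqrt_cos_add_sqrt_sin_rpow_neg_four, fun r hr ↦ ?_⟩
  rw [← integral_sqrt_abs_cos_add_sqrt_abs_sin_rpow_neg_four]
  refine intervalIntegral.integral_congr fun θ _ ↦ ?_
  rw [hr, ← rpow_natCast, ← rpow_mul (sqrt_abs_cos_add_sqrt_abs_sin_pos θ).le]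
  norm_num
end
end
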